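/- For every symmetrizable hyperbolic generalized Cartan matrix A of rank n ≥ 3, the real roots of the corresponding root system fall into at most 4 disjoint Weyl group orbits; that is, the set of orbits {W·e_1, …, W·e_n} has at most 4 distinct elements (equivalently, the simply laced skeleton of A has at most 4 connected components). -/

import Mathlib

/-- An integer matrix is a generalized Cartan matrix (GCM). -/
def IsGCM {ι : Type} (A : Matrix ι ι ℤ) : Prop :=
  (∀ i, A i i = 2) ∧ (∀ i j, i ≠ j → A i j ≤ 0) ∧ (∀ i j, A i j = 0 → A j i = 0)

/-- A GCM is symmetrizable if there are nonzero rationals `d i` with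
`d i * A i j = d j * A j i` for all `i, j`. -/
def IsSymmetrizable {ι : Type} (A : Matrix ι ι ℤ) : Prop :=
  ∃ d : ι → ℚ, (∀ i, d i ≠ 0) ∧ ∀ i j, d i * (A i j : ℚ) = d j * (A j i : ℚ)

/-- The Dynkin diagram graph of a GCM: `i` adjacent to `j` iff `i ≠ j` and `A i j ≠ 0`.
(For a GCM, `A i j ≠ 0 ↔ A j i ≠ 0`, so adjacency is stated symmetrically.) -/
def dynkinGraph {ι : Type} (A : Matrix ι ι ℤ) : SimpleGraph ι where
  Adj i j := i ≠ j ∧ A i j ≠ 0 ∧ A j i ≠ 0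
  symm := ⟨fun i j h => ⟨h.1.symm, h.2.2, h.2.1⟩⟩
  loopless := ⟨fun i h => h.1 rfl⟩

/-- The principal submatrix of `A` with rows and columns in `S`. -/
def matSub {ι : Type} (A : Matrix ι ι ℤ) (S : Finset ι) : Matrix S S ℤ :=
  fun i j => A i.1 j.1

/-- A GCM is of finite type if all of its principal minors are positive. -/
def IsFiniteType {ι : Type} [Fintype ι] [DecidableEq ι] (A : Matrix ι ι ℤ) : Prop :=
  ∀ S : Finset ι, 0 < (matSub A S).det

/-- An indecomposable GCM is of affine type if its determinant is `0` and all proper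
principal minors are positive (i.e. every proper principal submatrix is of finite type). -/
def IsAffineType {ι : Type} [Fintype ι] [DecidableEq ι] (A : Matrix ι ι ℤ) : Prop :=
  (dynkinGraph A).Connected ∧ A.det = 0 ∧
    ∀ S : Finset ι, S ≠ Finset.univ → 0 < (matSub A S).det

/-- An indecomposable GCM of rank at least 3 is hyperbolic if it is of neither finite nor
affine type, but every proper connected principal submatrix is of finite or affine type. -/
def IsHyperbolic {ι : Type} [Fintype ι] [DecidableEq ι] (A : Matrix ι ι ℤ) : Prop :=
  3 ≤ Fintype.card ι ∧ (dynkinGraph A).Connected ∧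
  ¬ IsFiniteType A ∧ ¬ IsAffineType A ∧
  ∀ S : Finset ι, S ≠ Finset.univ →
    ((dynkinGraph A).induce (S : Set ι)).Connected →
    (IsFiniteType (matSub A S) ∨ IsAffineType (matSub A S))

/-- A hyperbolic GCM is of compact hyperbolic type if every proper connected principal
submatrix is of finite type. -/
def IsCompactHyperbolic {ι : Type} [Fintype ι] [DecidableEq ι] (A : Matrix ι ι ℤ) : Prop :=
  IsHyperbolic A ∧ ∀ S : Finset ι, S ≠ Finset.univ →
    ((dynkinGraph A).induce (S : Set ι)).Connected → IsFiniteType (matSub A S)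

/-- The Weyl group of an `n × n` GCM `A`: the subgroup of linear automorphisms of `ℚ^n`
generated by the simple reflections `s i`, where `s i (e j) = e j - A i j • e i`. -/
def weylGroup {n : ℕ} (A : Matrix (Fin n) (Fin n) ℤ) :
    Subgroup ((Fin n → ℚ) ≃ₗ[ℚ] (Fin n → ℚ)) :=
  Subgroup.closure {w | ∃ i, ∀ j, w (Pi.single j 1) =
    (Pi.single j 1 : Fin n → ℚ) - (A i j : ℚ) • (Pi.single i 1 : Fin n → ℚ)}

/-- The orbit of the simple root `e i` under the Weyl group of `A`. -/
def weylOrbit {n : ℕ} (A : Matrix (Fin n) (Fin n) ℤ) (i : Fin n) : Set (Fin n → ℚ) :=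
  {v | ∃ w ∈ weylGroup A, w (Pi.single i 1) = v}

/-- The simply laced skeleton of `A`: the simple graph with `i` adjacent to `j` iff
`i ≠ j` and `A i j = -1 = A j i`. -/
def skeleton {n : ℕ} (A : Matrix (Fin n) (Fin n) ℤ) : SimpleGraph (Fin n) where
  Adj i j := i ≠ j ∧ A i j = -1 ∧ A j i = -1
  symm := ⟨fun i j h => ⟨h.1.symm, h.2.2, h.2.1⟩⟩
  loopless := ⟨fun i h => h.1 rfl⟩

/-!
Simple roots joined by a simply laced edge are Weyl conjugate (`s_j s_i e_j = e_i`), so it suffices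
to bound the number of colours of a colouring of the Dynkin diagram that is constant along simply
laced edges. Removing a non-cut vertex of a hyperbolic diagram loses at most one colour and leaves
a connected diagram of finite or affine type, and such diagrams admit at most three colours.

For a symmetrizable `A` of finite or affine type on `m` vertices, conjugating by the square roots
of a positive symmetrizer gives the symmetric matrix with entries `2` and `-√(a_ij a_ji)`, which has
the same principal minors and is therefore positive semidefinite; at the all-ones vector this reads
`∑_{i ≠ j} √(a_ij a_ji) ≤ 2m`. Building the connected diagram up one vertex at a time, each new
vertex is attached by an edge contributing at least `2` to this sum, and at least `2√2` if it
brings a new colour, so with `k` colours the sum is at least `2(m - 1) + 2(√2 - 1)(k - 1)`.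
Hence `(√2 - 1)(k - 1) ≤ 1`, i.e. `k ≤ 3`.
-/

open Matrix Finset

def Finset.sumUnitEquivInsert {ι : Type*} [DecidableEq ι] {a : ι} {T : Finset ι} (ha : a ∉ T) :
    (T ⊕ Unit) ≃ (insert a T : Finset ι) :=
  (Equiv.optionEquivSumPUnit T).symm.trans (subtypeInsertEquivOption ha).symm

namespace Matrix

variable {ι K : Type*}

def principalSubmatrix {R : Type*} (M : Matrix ι ι R) (S : Finset ι) : Matrix S S R :=
  M.submatrix (↑) (↑)

@[simp] lemma principalSubmatrix_apply {R : Type*} (M : Matrix ι ι R) (S : Finset ι) (i j : S) :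
    M.principalSubmatrix S i j = M i j := rfl

section Field

variable [Field K]

noncomputable def schurComplement (M : Matrix ι ι K) (a : ι) : Matrix ι ι K :=
  of fun i j => M i j - M i a * M a j / M a a

lemma inv_diagonal_of_ne_zero {n : Type*} [Fintype n] [DecidableEq n] {v : n → K}
    (hv : ∀ i, v i ≠ 0) : (diagonal v)⁻¹ = diagonal v⁻¹ :=
  inv_eq_left_inv (by simp [hv])

lemma schurComplement_principalSubmatrix (M : Matrix ι ι K) {a : ι} (haa : M a a ≠ 0)
    (T : Finset ι) :
    (schurComplement M a).principalSubmatrix T = M.principalSubmatrix T -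
      replicateCol Unit (fun t : T => M t a) * (diagonal fun _ : Unit => M a a)⁻¹ *
        replicateRow Unit (fun t : T => M a t) := by
  ext i j
  simp [schurComplement, inv_diagonal_of_ne_zero fun _ => haa, Matrix.mul_apply, div_eq_mul_inv]
  ring

variable [DecidableEq ι]

lemma principalSubmatrix_insert_submatrix (M : Matrix ι ι K) {a : ι} {T : Finset ι}
    (ha : a ∉ T) :
    (M.principalSubmatrix (insert a T)).submatrix (sumUnitEquivInsert ha) (sumUnitEquivInsert ha) =
      fromBlocks (M.principalSubmatrix T) (replicateCol Unit fun t : T => M t a)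
        (replicateRow Unit fun t : T => M a t) (diagonal fun _ => M a a) := by
  ext (i | i) (j | j) <;> rfl

lemma det_principalSubmatrix_insert (M : Matrix ι ι K) {a : ι} (haa : M a a ≠ 0)
    {T : Finset ι} (ha : a ∉ T) :
    (M.principalSubmatrix (insert a T)).det =
      M a a * ((schurComplement M a).principalSubmatrix T).det := by
  rw [← det_submatrix_equiv_self (sumUnitEquivInsert ha), principalSubmatrix_insert_submatrix]
  have : Invertible (diagonal fun _ : Unit => M a a) :=
    invertibleOfIsUnitDet _ (by simpa using haa)
  rw [det_fromBlocks₂₂, invOf_eq_nonsing_inv, schurComplement_principalSubmatrix M haa]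
  simp

end Field

section Real

lemma IsHermitian.schurComplement {M : Matrix ι ι ℝ} (hM : M.IsHermitian) (a : ι) :
    (schurComplement M a).IsHermitian := by
  ext i j
  simp [Matrix.schurComplement, ← hM.apply i j, ← hM.apply i a, ← hM.apply a j]
  ring

variable [DecidableEq ι]

lemma principalSubmatrix_singleton (M : Matrix ι ι ℝ) (a : ι) :
    M.principalSubmatrix {a} = diagonal fun _ => M a a := by
  ext ⟨i, hi⟩ ⟨j, hj⟩
  rw [Finset.mem_singleton] at hi hj
  subst hi hj
  simp

variable [Fintype ι]

lemma posSemidef_principalSubmatrix_insert {M : Matrix ι ι ℝ} (hM : M.IsHermitian) {a : ι}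
    (haa : 0 < M a a) {T : Finset ι} (ha : a ∉ T)
    (hC : ((schurComplement M a).principalSubmatrix T).PosSemidef) :
    (M.principalSubmatrix (insert a T)).PosSemidef := by
  rw [← posSemidef_submatrix_equiv (sumUnitEquivInsert ha), principalSubmatrix_insert_submatrix]
  have hrow : (replicateRow Unit fun t : T => M a t) =
      (replicateCol Unit fun t : T => M t a)ᴴ := by
    ext i j
    simp [← hM.apply a j]
  have hD : (diagonal fun _ : Unit => M a a).PosDef := posDef_diagonal_iff.2 fun _ => haa
  have : Invertible (diagonal fun _ : Unit => M a a) := hD.isUnit.invertible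
  rw [hrow, PosDef.fromBlocks₂₂ _ _ hD, ← hrow, ← schurComplement_principalSubmatrix M haa.ne']
  exact hC

lemma posSemidef_principalSubmatrix_of_minors {M : Matrix ι ι ℝ} (hM : M.IsHermitian)
    (S : Finset ι) (hminor : ∀ T ⊂ S, 0 < (M.principalSubmatrix T).det)
    (hS : 0 ≤ (M.principalSubmatrix S).det) : (M.principalSubmatrix S).PosSemidef := by
  induction S using Finset.induction_on generalizing M with
  | empty => exact Subsingleton.elim (M.principalSubmatrix ∅) 0 ▸ PosSemidef.zero
  | insert a T ha ih =>
    rcases T.eq_empty_or_nonempty with rfl | hT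
    · rw [insert_empty, principalSubmatrix_singleton] at hS ⊢
      simpa using hS
    have hsub : {a} ⊂ insert a T := by
      obtain ⟨b, hb⟩ := hT
      exact (ssubset_iff_of_subset (by simp)).2 ⟨b, mem_insert_of_mem hb, by grind⟩
    have haa : 0 < M a a := by simpa [principalSubmatrix_singleton] using hminor {a} hsub
    have hdet : ∀ U, a ∉ U → (M.principalSubmatrix (insert a U)).det / M a a =
        ((schurComplement M a).principalSubmatrix U).det := fun U hU => by
      rw [det_principalSubmatrix_insert M haa.ne' hU]
      field_simp
    refine posSemidef_principalSubmatrix_insert hM haa ha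
      (ih (hM.schurComplement a) (fun U hU => ?_) ?_)
    · obtain ⟨b, hbT, hbU⟩ := (ssubset_iff_of_subset hU.subset).1 hU
      rw [← hdet U fun h => ha (hU.subset h)]
      exact div_pos (hminor _ ((ssubset_iff_of_subset (insert_subset_insert a hU.subset)).2
        ⟨b, mem_insert_of_mem hbT, by grind⟩)) haa
    · rw [← hdet T ha]
      exact div_nonneg hS haa.le

lemma posSemidef_of_minors {M : Matrix ι ι ℝ} (hM : M.IsHermitian)
    (hminor : ∀ S : Finset ι, S ≠ univ → 0 < (M.principalSubmatrix S).det) (hdet : 0 ≤ M.det) :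
    M.PosSemidef := by
  have huniv : M.principalSubmatrix univ = M.submatrix (Equiv.subtypeUnivEquiv mem_univ)
      (Equiv.subtypeUnivEquiv mem_univ) := rfl
  have := posSemidef_principalSubmatrix_of_minors hM univ (fun T hT => hminor T hT.ne)
    (by rwa [huniv, det_submatrix_equiv_self])
  rwa [huniv, posSemidef_submatrix_equiv] at this

end Real

end Matrix

section GeneralizedCartan

variable {ι : Type} {A : Matrix ι ι ℤ}

lemma IsGCM.matSub (hA : IsGCM A) (S : Finset ι) : IsGCM (matSub A S) :=
  ⟨fun i => hA.1 i, fun i j hij => hA.2.1 i j (Subtype.coe_ne_coe.2 hij), fun i j => hA.2.2 i j⟩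

lemma IsSymmetrizable.matSub (hsym : IsSymmetrizable A) (S : Finset ι) :
    IsSymmetrizable (matSub A S) :=
  let ⟨d, hd0, hd⟩ := hsym
  ⟨fun i => d i, fun i => hd0 i, fun i j => hd i j⟩

lemma IsGCM.neg_of_adj (hA : IsGCM A) {i j : ι} (h : (dynkinGraph A).Adj i j) :
    A i j < 0 ∧ A j i < 0 :=
  ⟨(hA.2.1 i j h.1).lt_of_ne h.2.1, (hA.2.1 j i h.1.symm).lt_of_ne h.2.2⟩

lemma IsGCM.adj_of_ne_zero (hA : IsGCM A) {i j : ι} (hij : i ≠ j) (h : A i j ≠ 0) :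
    (dynkinGraph A).Adj i j :=
  ⟨hij, h, fun h' => h (hA.2.2 j i h')⟩

lemma dynkinGraph_matSub (S : Finset ι) :
    dynkinGraph (matSub A S) = (dynkinGraph A).induce (S : Set ι) := by
  ext i j
  exact and_congr Subtype.coe_ne_coe.symm Iff.rfl

lemma IsGCM.one_le_mul_of_adj (hA : IsGCM A) {i j : ι} (h : (dynkinGraph A).Adj i j) :
    1 ≤ A i j * A j i := by
  obtain ⟨h1, h2⟩ := hA.neg_of_adj h
  nlinarith

lemma IsGCM.two_le_mul_of_adj (hA : IsGCM A) {i j : ι} (h : (dynkinGraph A).Adj i j)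
    (h' : ¬(A i j = -1 ∧ A j i = -1)) : 2 ≤ A i j * A j i := by
  obtain ⟨h1, h2⟩ := hA.neg_of_adj h
  by_cases hij : A i j = -1
  · have : A j i ≤ -2 := by omega
    nlinarith
  · have : A i j ≤ -2 := by omega
    nlinarith

lemma IsSymmetrizable.exists_pos (hA : IsGCM A) (hsym : IsSymmetrizable A) :
    ∃ d : ι → ℝ, (∀ i, 0 < d i) ∧ ∀ i j, d i * A i j = d j * A j i := by
  obtain ⟨d, hd0, hd⟩ := hsym
  -- `d i` and `d j` have the same sign whenever `A i j ≠ 0`, so `|d|` is again a symmetrizer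
  refine ⟨fun i => |(d i : ℝ)|, fun i => by simpa using hd0 i, fun i j => ?_⟩
  have hdij : (d i : ℝ) * A i j = d j * A j i := by exact_mod_cast hd i j
  rcases eq_or_ne i j with rfl | hij
  · rfl
  by_cases h : A i j = 0
  · simp [h, hA.2.2 i j h]
  obtain ⟨hneg, hneg'⟩ := hA.neg_of_adj (hA.adj_of_ne_zero hij h)
  have hneg : (A i j : ℝ) < 0 := by exact_mod_cast hneg
  have hneg' : (A j i : ℝ) < 0 := by exact_mod_cast hneg'
  have hdi : (d i : ℝ) ≠ 0 := by exact_mod_cast hd0 i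
  have hdj : (d j : ℝ) ≠ 0 := by exact_mod_cast hd0 j
  rcases hdi.lt_or_gt with hi | hi <;> rcases hdj.lt_or_gt with hj | hj <;>
    simp only [abs_of_neg, abs_of_pos, hi, hj] <;> nlinarith

variable [DecidableEq ι]

noncomputable def symmetrizedCartan (A : Matrix ι ι ℤ) : Matrix ι ι ℝ :=
  Matrix.of fun i j => if i = j then 2 else -√(A i j * A j i : ℝ)

lemma symmetrizedCartan_apply_of_symmetrizer (hA : IsGCM A) {d : ι → ℝ} (hd0 : ∀ i, 0 < d i)
    (hd : ∀ i j, d i * A i j = d j * A j i) (i j : ι) :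
    symmetrizedCartan A i j = √(d i) * A i j / √(d j) := by
  have hsi := Real.sqrt_pos.2 (hd0 i)
  have hsj := Real.sqrt_pos.2 (hd0 j)
  rcases eq_or_ne i j with rfl | hij
  · simp [symmetrizedCartan, hA.1 i, hsi.ne']
  -- the right-hand side is nonpositive and squares to `A i j * A j i`
  have hle : √(d i) * A i j / √(d j) ≤ 0 :=
    div_nonpos_of_nonpos_of_nonneg (mul_nonpos_of_nonneg_of_nonpos hsi.le
      (by exact_mod_cast hA.2.1 i j hij)) hsj.le
  have hsq : (√(d i) * A i j / √(d j)) ^ 2 = A i j * A j i := by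
    rw [div_pow, mul_pow, Real.sq_sqrt (hd0 i).le, Real.sq_sqrt (hd0 j).le]
    field_simp [(hd0 j).ne']
    linear_combination (A i j : ℝ) * hd i j
  simp [symmetrizedCartan, hij, ← hsq, Real.sqrt_sq_eq_abs, abs_of_nonpos hle]

lemma symmetrizedCartan_matSub (S : Finset ι) :
    symmetrizedCartan (matSub A S) = (symmetrizedCartan A).principalSubmatrix S := by
  ext i j
  simp only [symmetrizedCartan, matSub, of_apply, principalSubmatrix_apply, Subtype.ext_iff]

lemma isHermitian_symmetrizedCartan : (symmetrizedCartan A).IsHermitian := by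
  ext i j
  by_cases h : i = j
  · simp [symmetrizedCartan, h]
  · simp [symmetrizedCartan, h, Ne.symm h, mul_comm]

variable [Fintype ι]

lemma det_symmetrizedCartan (hA : IsGCM A) (hsym : IsSymmetrizable A) :
    (symmetrizedCartan A).det = A.det := by
  obtain ⟨d, hd0, hd⟩ := hsym.exists_pos hA
  have hconj : symmetrizedCartan A =
      diagonal (fun i => √(d i)) * A.map (Int.cast : ℤ → ℝ) * diagonal (fun i => (√(d i))⁻¹) := by
    ext i j
    simp [symmetrizedCartan_apply_of_symmetrizer hA hd0 hd, div_eq_mul_inv]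
  rw [hconj, det_mul, det_mul, det_diagonal, det_diagonal, Int.cast_det, mul_right_comm,
    ← prod_mul_distrib]
  simp [fun i => (Real.sqrt_pos.2 (hd0 i)).ne']

lemma IsFiniteType.det_pos (h : IsFiniteType A) : 0 < A.det := by
  have := h univ
  rwa [show matSub A univ = A.submatrix (Equiv.subtypeUnivEquiv mem_univ)
    (Equiv.subtypeUnivEquiv mem_univ) from rfl, det_submatrix_equiv_self] at this

lemma posSemidef_symmetrizedCartan (hA : IsGCM A) (hsym : IsSymmetrizable A)
    (htype : IsFiniteType A ∨ IsAffineType A) : (symmetrizedCartan A).PosSemidef := by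
  refine posSemidef_of_minors isHermitian_symmetrizedCartan (fun S hS => ?_) ?_
  · rw [← symmetrizedCartan_matSub, det_symmetrizedCartan (hA.matSub S) (hsym.matSub S)]
    exact_mod_cast htype.elim (fun h => h S) (fun h => h.2.2 S hS)
  · rw [det_symmetrizedCartan hA hsym]
    exact_mod_cast htype.elim (fun h => h.det_pos.le) (fun h => h.2.1.ge)

lemma sum_sum_sqrt_le_two_mul_card (hA : IsGCM A) (hsym : IsSymmetrizable A)
    (htype : IsFiniteType A ∨ IsAffineType A) :
    ∑ i, ∑ j, (if i = j then 0 else √(A i j * A j i : ℝ)) ≤ 2 * Fintype.card ι := by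
  have h := (posSemidef_symmetrizedCartan hA hsym htype).dotProduct_mulVec_nonneg 1
  have hentry : ∀ i j, symmetrizedCartan A i j =
      (if i = j then 2 else 0) - (if i = j then 0 else √(A i j * A j i : ℝ)) := by
    intro i j; by_cases i = j <;> simp [symmetrizedCartan, *]
  simp only [star_one, dotProduct, mulVec, Pi.one_apply, one_mul, mul_one, hentry,
    sum_sub_distrib, sum_ite_eq, mem_univ, if_true, sum_const, card_univ, nsmul_eq_mul] at h
  linarith

end GeneralizedCartan

namespace SimpleGraph

variable {V : Type*} [DecidableEq V] {G : SimpleGraph V}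

lemma Connected.exists_mem_connected_induce_erase {S : Finset V}
    (hS : (G.induce (S : Set V)).Connected) (h : 1 < #S) :
    ∃ v ∈ S, (G.induce (S.erase v : Set V)).Connected := by
  have : Nontrivial (S : Set V) := Set.nontrivial_coe_sort.2 (one_lt_card_iff_nontrivial.1 h)
  obtain ⟨v, hv⟩ := hS.exists_connected_induce_compl_singleton_of_finite_nontrivial
  let φ : (G.induce (S : Set V)).induce {v}ᶜ →g G.induce (S.erase v : Set V) :=
    ⟨fun u => ⟨u.1.1, mem_erase.2 ⟨fun h => u.2 (Subtype.ext h), u.1.2⟩⟩, fun h => h⟩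
  refine ⟨v, v.2, hv.map φ fun u => ?_⟩
  have hu : (u : V) ∈ S.erase v := u.2
  exact ⟨⟨⟨u, mem_of_mem_erase hu⟩, fun h => ne_of_mem_erase hu (congrArg Subtype.val h)⟩, rfl⟩

variable {K β : Type*} [Field K] [LinearOrder K] [IsStrictOrderedRing K] [DecidableEq β]

theorem Connected.le_sum_sum_of_induce (f : V → β) {F : V → V → K} {c : K}
    (hF0 : ∀ i j, 0 ≤ F i j) (hF1 : ∀ i j, G.Adj i j → 1 ≤ F i j)
    (hFc : ∀ i j, G.Adj i j → f i ≠ f j → c ≤ F i j) {S : Finset V}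
    (hS : (G.induce (S : Set V)).Connected) :
    2 * ((#S - 1 : K) + (c - 1) * (#(S.image f) - 1)) ≤ ∑ i ∈ S, ∑ j ∈ S, F i j := by
  induction S using Finset.strongInduction with
  | H S ih =>
    obtain ⟨⟨a, ha⟩⟩ := hS.nonempty
    rcases le_or_gt #S 1 with h1 | h1
    · obtain rfl : S = {a} :=
        eq_singleton_iff_unique_mem.2 ⟨ha, fun b hb => card_le_one.1 h1 b hb a ha⟩
      simpa using hF0 a a
    obtain ⟨v, hv, hconn⟩ := hS.exists_mem_connected_induce_erase h1
    have : Nontrivial (S : Set V) := Set.nontrivial_coe_sort.2 (one_lt_card_iff_nontrivial.1 h1)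
    obtain ⟨⟨u, huS⟩, hvu⟩ := hS.preconnected.exists_adj_of_nontrivial ⟨v, hv⟩
    have hu : u ∈ S.erase v := mem_erase.2 ⟨(G.ne_of_adj hvu).symm, huS⟩
    have IH := ih _ (erase_ssubset hv) hconn
    have hsplit : ∑ i ∈ S, ∑ j ∈ S, F i j = F v v + ∑ j ∈ S.erase v, F v j +
        ∑ i ∈ S.erase v, F i v + ∑ i ∈ S.erase v, ∑ j ∈ S.erase v, F i j := by
      rw [← insert_erase hv]
      simp only [sum_insert (notMem_erase v S), sum_add_distrib, erase_insert_eq_erase, erase_idem]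
      ring
    have hrow : F v u ≤ ∑ j ∈ S.erase v, F v j := single_le_sum (fun j _ => hF0 v j) hu
    have hcol : F u v ≤ ∑ i ∈ S.erase v, F i v := single_le_sum (fun i _ => hF0 i v) hu
    have hcard : (#S : K) = #(S.erase v) + 1 := by
      rw [cast_card_erase_of_mem hv]; ring
    have himage : S.image f = insert (f v) ((S.erase v).image f) := by
      rw [← image_insert, insert_erase hv]
    by_cases hfv : f v ∈ (S.erase v).image f
    · rw [himage, insert_eq_of_mem hfv, hcard, hsplit]
      linarith [hF1 v u hvu, hF1 u v hvu.symm, hF0 v v]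
    · have hfvu : f v ≠ f u := fun h => hfv (h ▸ mem_image_of_mem f hu)
      rw [himage, card_insert_of_notMem hfv, hcard, hsplit]
      push_cast
      linarith [hFc v u hvu hfvu, hFc u v hvu.symm hfvu.symm, hF0 v v]

end SimpleGraph

section Weyl

variable {ι : Type} [Fintype ι] [DecidableEq ι]

noncomputable def simpleReflection (A : Matrix ι ι ℤ) (i : ι) (hi : A i i = 2) :
    (ι → ℚ) ≃ₗ[ℚ] (ι → ℚ) :=
  LinearEquiv.ofInvolutive
    (LinearMap.id - ((LinearMap.proj i).comp (toLin' (A.map (Int.cast : ℤ → ℚ)))).smulRight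
      (Pi.single i 1))
    (fun v => by
      simp [mulVec_sub, mulVec_smul, hi]
      module)

lemma simpleReflection_apply (A : Matrix ι ι ℤ) (i : ι) (hi : A i i = 2) (v : ι → ℚ) :
    simpleReflection A i hi v = v - (A.map (Int.cast : ℤ → ℚ) *ᵥ v) i • Pi.single i 1 := rfl

lemma simpleReflection_single (A : Matrix ι ι ℤ) (i : ι) (hi : A i i = 2) (j : ι) :
    simpleReflection A i hi (Pi.single j 1) = Pi.single j 1 - (A i j : ℚ) • Pi.single i 1 := by
  simp [simpleReflection_apply]

end Weyl

section WeylOrbit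

variable {n : ℕ} {A : Matrix (Fin n) (Fin n) ℤ}

lemma simpleReflection_mem_weylGroup (i : Fin n) (hi : A i i = 2) :
    simpleReflection A i hi ∈ weylGroup A :=
  Subgroup.subset_closure ⟨i, simpleReflection_single A i hi⟩

lemma weylOrbit_eq_orbit (i : Fin n) :
    weylOrbit A i = MulAction.orbit (weylGroup A) (Pi.single i 1 : Fin n → ℚ) := by
  ext v
  simp [weylOrbit, MulAction.mem_orbit_iff]

lemma weylOrbit_eq_of_simplyLaced {i j : Fin n} (hi : A i i = 2) (hj : A j j = 2)
    (hij : A i j = -1) (hji : A j i = -1) : weylOrbit A i = weylOrbit A j := by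
  rw [weylOrbit_eq_orbit, weylOrbit_eq_orbit, MulAction.orbit_eq_iff]
  refine ⟨⟨simpleReflection A j hj * simpleReflection A i hi, mul_mem
    (simpleReflection_mem_weylGroup j hj) (simpleReflection_mem_weylGroup i hi)⟩, ?_⟩
  show simpleReflection A j hj (simpleReflection A i hi (Pi.single j 1)) = Pi.single i 1
  simp [simpleReflection_single, hj, hij, hji]
  module

end WeylOrbit

theorem ncard_range_le_three {ι : Type} [Fintype ι] [DecidableEq ι] {A : Matrix ι ι ℤ}
    (hA : IsGCM A) (hsym : IsSymmetrizable A)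
    (hconn : (dynkinGraph A).Connected) (htype : IsFiniteType A ∨ IsAffineType A) {β : Type*}
    (f : ι → β) (hf : ∀ i j, A i j = -1 → A j i = -1 → f i = f j) :
    (Set.range f).ncard ≤ 3 := by
  classical
  set F : ι → ι → ℝ := fun i j => if i = j then 0 else √(A i j * A j i : ℝ)
  have hF1 : ∀ i j, (dynkinGraph A).Adj i j → 1 ≤ F i j := fun i j h => by
    simpa [F, h.ne, Real.one_le_sqrt] using (by exact_mod_cast hA.one_le_mul_of_adj h : (1 : ℝ) ≤ _)
  have hFc : ∀ i j, (dynkinGraph A).Adj i j → f i ≠ f j → √2 ≤ F i j := fun i j h hfij => by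
    have : (2 : ℝ) ≤ A i j * A j i := by
      exact_mod_cast hA.two_le_mul_of_adj h fun h' => hfij (hf i j h'.1 h'.2)
    simpa [F, h.ne] using Real.sqrt_le_sqrt this
  have hconn' : ((dynkinGraph A).induce (univ : Finset ι)).Connected := by
    rw [coe_univ]; exact (SimpleGraph.induceUnivIso _).connected_iff.2 hconn
  have hlow := hconn'.le_sum_sum_of_induce f (fun i j => by positivity) hF1 hFc
  have hup := sum_sum_sqrt_le_two_mul_card hA hsym htype
  rw [show Set.range f = ↑(univ.image f) by simp, Set.ncard_coe_finset]
  by_contra! h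
  have h4 : (4 : ℝ) ≤ #(univ.image f) := by exact_mod_cast h
  simp only [card_univ] at hlow
  nlinarith [Real.sq_sqrt (show (0 : ℝ) ≤ 2 by norm_num), Real.sqrt_nonneg 2]

/-- For a symmetrizable hyperbolic GCM, the real roots fall into at most 4 disjoint Weyl
group orbits: the set `{W·e 1, …, W·e n}` has at most 4 distinct elements. -/
theorem hyperbolic_at_most_four_weyl_orbits {n : ℕ} (A : Matrix (Fin n) (Fin n) ℤ)
    (hA : IsGCM A) (hsym : IsSymmetrizable A) (hhyp : IsHyperbolic A) :
    (Set.range fun i => weylOrbit A i).ncard ≤ 4 := by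
  obtain ⟨hcard, hconn, -, -, hsub⟩ := hhyp
  have : Nontrivial (Fin n) := Fin.nontrivial_iff_two_le.2 (by simp at hcard; omega)
  obtain ⟨v, hv⟩ := hconn.exists_connected_induce_compl_singleton_of_finite_nontrivial
  set S := univ.erase v
  have hS : (S : Set (Fin n)) = {v}ᶜ := by simp [S, Set.compl_eq_univ_sdiff]
  have hconnS : ((dynkinGraph A).induce (S : Set (Fin n))).Connected := hS ▸ hv
  have h3 := ncard_range_le_three (hA.matSub S) (hsym.matSub S)
    (dynkinGraph_matSub S ▸ hconnS) (hsub S (by simp [S]) hconnS) (fun i : S => weylOrbit A i)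
    fun i j hij hji => weylOrbit_eq_of_simplyLaced (hA.1 _) (hA.1 _) hij hji
  calc (Set.range fun i => weylOrbit A i).ncard
      ≤ (insert (weylOrbit A v) (Set.range fun i : S => weylOrbit A i)).ncard := by
        refine Set.ncard_le_ncard ?_ ((Set.finite_range _).insert _)
        rintro _ ⟨i, rfl⟩
        rcases eq_or_ne i v with rfl | hi
        · exact Set.mem_insert _ _
        · exact Set.mem_insert_of_mem _ ⟨⟨i, mem_erase.2 ⟨hi, mem_univ i⟩⟩, rfl⟩
    _ ≤ 4 := (Set.ncard_insert_le _ _).trans (by omega)
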